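/- There exists a two-qubit state that violates the Bell-CHSH inequality yet belongs to ACVENN: the Werner state σ_p with p = 18/25 satisfies M(σ_p) = 2p² > 1 and S(σ_p) ≥ 1. -/

import Mathlib

open Matrix Finset
open scoped Kronecker ComplexOrder Classical

noncomputable section

/-- A quantum state: positive semidefinite matrix of trace 1. -/
def IsState {n : ℕ} (ρ : Matrix (Fin n) (Fin n) ℂ) : Prop :=
  ρ.PosSemidef ∧ ρ.trace = 1

/-- Von Neumann entropy `S(ρ) = -∑ᵢ λᵢ log₂ λᵢ` over the eigenvalues of `ρ`
(with the convention `0 · log₂ 0 = 0`, which holds since `Real.logb 2 0 = 0`). -/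
noncomputable def vnEntropy {n : ℕ} (ρ : Matrix (Fin n) (Fin n) ℂ) : ℝ :=
  if h : ρ.IsHermitian then -∑ i, h.eigenvalues i * Real.logb 2 (h.eigenvalues i) else 0

/-- Reduced state `ρ_A`: partial trace over the second tensor factor,
using the ordered product basis `|00⟩,|01⟩,|10⟩,|11⟩`, i.e. `|ab⟩ ↦ 2a+b`. -/
def ptraceB (ρ : Matrix (Fin 4) (Fin 4) ℂ) : Matrix (Fin 2) (Fin 2) ℂ :=
  Matrix.of fun i j => ∑ k : Fin 2,
    ρ ⟨2 * i.val + k.val, by omega⟩ ⟨2 * j.val + k.val, by omega⟩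

/-- Reduced state `ρ_B`: partial trace over the first tensor factor. -/
def ptraceA (ρ : Matrix (Fin 4) (Fin 4) ℂ) : Matrix (Fin 2) (Fin 2) ℂ :=
  Matrix.of fun i j => ∑ k : Fin 2,
    ρ ⟨2 * k.val + i.val, by omega⟩ ⟨2 * k.val + j.val, by omega⟩

/-- Conditional von Neumann entropy `S(A|B) = S(ρ_AB) - S(ρ_A)`. -/
def condEntropy (ρ : Matrix (Fin 4) (Fin 4) ℂ) : ℝ :=
  vnEntropy ρ - vnEntropy (ptraceB ρ)

/-- Rank-one projector `|v⟩⟨v|`. -/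
def proj (v : Fin 4 → ℂ) : Matrix (Fin 4) (Fin 4) ℂ := Matrix.vecMulVec v (star v)

/-- The Bell basis `|φ⁺⟩, |φ⁻⟩, |ψ⁺⟩, |ψ⁻⟩`. -/
noncomputable def bell : Fin 4 → Fin 4 → ℂ :=
  ![![(Real.sqrt 2 : ℂ)⁻¹, 0, 0, (Real.sqrt 2 : ℂ)⁻¹],
    ![(Real.sqrt 2 : ℂ)⁻¹, 0, 0, -(Real.sqrt 2 : ℂ)⁻¹],
    ![0, (Real.sqrt 2 : ℂ)⁻¹, (Real.sqrt 2 : ℂ)⁻¹, 0],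
    ![0, (Real.sqrt 2 : ℂ)⁻¹, -(Real.sqrt 2 : ℂ)⁻¹, 0]]

/-- Kronecker product of two one-qubit matrices as a `4 × 4` matrix,
with the index identification `(a,b) ↦ 2a+b`. -/
def kron (A B : Matrix (Fin 2) (Fin 2) ℂ) : Matrix (Fin 4) (Fin 4) ℂ :=
  Matrix.reindex finProdFinEquiv finProdFinEquiv (A ⊗ₖ B)

/-- The Werner state `σ_p = p|φ⁺⟩⟨φ⁺| + (1-p) I₄/4`. -/
noncomputable def werner (p : ℝ) : Matrix (Fin 4) (Fin 4) ℂ :=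
  (p : ℂ) • proj (bell 0) + (((1 - p) / 4 : ℝ) : ℂ) • 1

/-- The Pauli matrices `σ₁, σ₂, σ₃`. -/
def pauli : Fin 3 → Matrix (Fin 2) (Fin 2) ℂ :=
  ![!![0, 1; 1, 0], !![0, -Complex.I; Complex.I, 0], !![1, 0; 0, -1]]

/-- The correlation matrix `T` of a two-qubit state, `t_ij = Tr[ρ (σᵢ ⊗ σⱼ)]`. -/
noncomputable def corrT (ρ : Matrix (Fin 4) (Fin 4) ℂ) : Matrix (Fin 3) (Fin 3) ℝ :=
  Matrix.of fun i j => (Matrix.trace (ρ * kron (pauli i) (pauli j))).re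

/-!
The Werner state `σ_p = p P + (1 - p)/4 I`, with `P` the projector onto `|φ⁺⟩`, has correlation
matrix `diag(p, -p, p)`, so `TᵀT = p² I` and `M(σ_p) = 2p²`. It is annihilated by
`(X - (1 + 3p)/4)(X - (1 - p)/4)`, a relation preserved by unitary conjugation; together with
trace one this pins the spectrum of every `UσU†` to `(1 + 3p)/4, (1 - p)/4, (1 - p)/4, (1 - p)/4`,
whose entropy at `p = 18/25` exceeds one bit. A qubit state has entropy at most one bit, by
concavity of `x ↦ -x log x`, so the conditional entropy of `UσU†` is nonnegative.
-/

open Polynomial Real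

theorem Matrix.IsHermitian.eval_eigenvalues_eq_zero {n 𝕜 : Type*} [Fintype n] [DecidableEq n]
    [RCLike 𝕜] {A : Matrix n n 𝕜} (hA : A.IsHermitian) {q : ℝ[X]} (hq : aeval A q = 0)
    (i : n) : q.eval (hA.eigenvalues i) = 0 := by
  have : Nonempty n := ⟨i⟩
  simpa [hq, spectrum.zero_eq] using
    spectrum.subset_polynomial_aeval A q ⟨_, hA.eigenvalues_mem_spectrum_real i, rfl⟩

theorem Matrix.IsHermitian.eigenvalues_eq_of_eq_algebraMap {n 𝕜 : Type*} [Fintype n]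
    [DecidableEq n] [RCLike 𝕜] {A : Matrix n n 𝕜} (hA : A.IsHermitian) {c : ℝ}
    (hc : A = algebraMap ℝ _ c) (i : n) : hA.eigenvalues i = c := by
  have h := hA.eval_eigenvalues_eq_zero (q := X - C c) (by simp [hc]) i
  rwa [eval_sub, eval_X, eval_C, sub_eq_zero] at h

theorem Finset.sum_comp_eq_of_forall_eq_or_eq {ι : Type*} (s : Finset ι) (f : ℝ → ℝ)
    {x : ι → ℝ} {a b : ℝ} (hab : a ≠ b) (hx : ∀ i ∈ s, x i = a ∨ x i = b) :
    ∑ i ∈ s, f (x i) = #s * f b + (∑ i ∈ s, x i - #s * b) / (a - b) * (f a - f b) := by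
  have hab' : a - b ≠ 0 := sub_ne_zero.mpr hab
  have interp : ∀ i ∈ s, f (x i) = f b + (x i - b) / (a - b) * (f a - f b) := by
    intro i hi
    rcases hx i hi with h | h <;> rw [h] <;> field_simp <;> ring
  rw [sum_congr rfl interp, sum_add_distrib, ← sum_mul, ← sum_div, sum_sub_distrib]
  simp

theorem vnEntropy_eq_sum_negMulLog {n : ℕ} {ρ : Matrix (Fin n) (Fin n) ℂ} (hρ : ρ.IsHermitian) :
    vnEntropy ρ = (∑ i, negMulLog (hρ.eigenvalues i)) / log 2 := by
  simp only [vnEntropy, dif_pos hρ, logb, negMulLog, sum_div, ← sum_neg_distrib]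
  congr 1 with i
  ring

theorem Matrix.IsHermitian.sum_eigenvalues_eq_one {n 𝕜 : Type*} [Fintype n] [DecidableEq n]
    [RCLike 𝕜] {A : Matrix n n 𝕜} (hA : A.IsHermitian) (htr : A.trace = 1) :
    ∑ i, hA.eigenvalues i = 1 := by
  have h := hA.trace_eq_sum_eigenvalues.symm.trans htr
  rw [← RCLike.ofReal_sum, ← RCLike.ofReal_one] at h
  exact RCLike.ofReal_injective h

theorem vnEntropy_le_logb_card {n : ℕ} {ρ : Matrix (Fin n) (Fin n) ℂ} (hρ : IsState ρ) :
    vnEntropy ρ ≤ logb 2 n := by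
  obtain ⟨hpsd, htr⟩ := hρ
  have hsum := hpsd.isHermitian.sum_eigenvalues_eq_one htr
  have hn : (n : ℝ) ≠ 0 := by
    rintro h
    obtain rfl : n = 0 := by exact_mod_cast h
    simp at hsum
  have jensen := concaveOn_negMulLog.le_map_sum (t := univ) (w := fun _ => (n : ℝ)⁻¹)
    (p := hpsd.isHermitian.eigenvalues) (fun _ _ => by positivity) (by simp [hn])
    (fun i _ => hpsd.eigenvalues_nonneg i)
  simp only [smul_eq_mul, ← mul_sum, hsum, mul_one] at jensen
  rw [vnEntropy_eq_sum_negMulLog hpsd.isHermitian, logb]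
  gcongr
  rw [inv_mul_le_iff₀ (by positivity), negMulLog, log_inv] at jensen
  simpa [hn] using jensen

theorem vnEntropy_eq_of_aeval_eq_zero {n : ℕ} {ρ : Matrix (Fin n) (Fin n) ℂ}
    (hρ : ρ.IsHermitian) (htr : ρ.trace = 1) {a b : ℝ} (hab : a ≠ b)
    (hq : aeval ρ ((X - C a) * (X - C b)) = 0) :
    vnEntropy ρ =
      (n * negMulLog b + (1 - n * b) / (a - b) * (negMulLog a - negMulLog b)) / log 2 := by
  have hmem : ∀ i ∈ univ, hρ.eigenvalues i = a ∨ hρ.eigenvalues i = b := fun i _ => by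
    have := hρ.eval_eigenvalues_eq_zero hq i
    simp only [eval_mul, eval_sub, eval_X, eval_C, mul_eq_zero, sub_eq_zero] at this
    exact this
  rw [vnEntropy_eq_sum_negMulLog hρ, sum_comp_eq_of_forall_eq_or_eq _ _ hab hmem,
    hρ.sum_eigenvalues_eq_one htr, card_univ, Fintype.card_fin]

theorem aeval_conj_unitary {n : Type*} [Fintype n] [DecidableEq n]
    {A U : Matrix n n ℂ} (hU : U ∈ unitaryGroup n ℂ) (q : ℝ[X]) :
    aeval (U * A * Uᴴ) q = U * aeval A q * Uᴴ :=
  aeval_algHom_apply (Unitary.conjStarAlgAut ℝ _ ⟨U, hU⟩) A q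

theorem IsState.conj_unitary {n : ℕ} {ρ U : Matrix (Fin n) (Fin n) ℂ} (hρ : IsState ρ)
    (hU : U ∈ unitaryGroup (Fin n) ℂ) : IsState (U * ρ * Uᴴ) :=
  ⟨hρ.1.mul_mul_conjTranspose_same U, by
    rw [trace_mul_cycle, ← star_eq_conjTranspose, mem_unitaryGroup_iff'.mp hU, one_mul, hρ.2]⟩

/-- The isometry `|i⟩ ↦ |i k⟩` of `ℂ²` into `ℂ² ⊗ ℂ²`. -/
def embedB (k : Fin 2) : Matrix (Fin 4) (Fin 2) ℂ :=
  of fun r i => if (r : ℕ) = 2 * i + k then 1 else 0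

theorem ptraceB_eq_sum (ρ : Matrix (Fin 4) (Fin 4) ℂ) :
    ptraceB ρ = ∑ k, (embedB k)ᴴ * ρ * embedB k := by
  ext i j
  fin_cases i <;> fin_cases j <;>
    simp [ptraceB, embedB, mul_apply, Fin.sum_univ_four, conjTranspose_apply]

theorem IsState.ptraceB {ρ : Matrix (Fin 4) (Fin 4) ℂ} (hρ : IsState ρ) :
    IsState (ptraceB ρ) := by
  refine ⟨?_, ?_⟩
  · rw [ptraceB_eq_sum]
    exact posSemidef_sum _ fun k _ => hρ.1.conjTranspose_mul_mul_same _
  · rw [← hρ.2]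
    simp [_root_.ptraceB, trace, Fin.sum_univ_four]
    ring

theorem werner_eq (p : ℝ) : werner p =
    !![(1 + p : ℂ) / 4, 0, 0, p / 2; 0, (1 - p) / 4, 0, 0; 0, 0, (1 - p) / 4, 0;
      p / 2, 0, 0, (1 + p) / 4] := by
  have hsqrt : ((√2 : ℝ) : ℂ)⁻¹ * ((√2 : ℝ) : ℂ)⁻¹ = 1 / 2 := by
    rw [← mul_inv, ← Complex.ofReal_mul, mul_self_sqrt zero_le_two]
    norm_num
  ext i j
  fin_cases i <;> fin_cases j <;>
    simp [werner, proj, bell, vecMulVec_apply, one_apply, hsqrt, -cons_vecMulVec] <;> ring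

theorem trace_werner (p : ℝ) : (werner p).trace = 1 := by
  simp [werner_eq, trace, Fin.sum_univ_four]
  ring

theorem posSemidef_werner {p : ℝ} (hp₀ : 0 ≤ p) (hp₁ : p ≤ 1) : (werner p).PosSemidef :=
  ((posSemidef_vecMulVec_self_star _).smul (Complex.zero_le_real.mpr hp₀)).add
    (PosSemidef.one.smul (Complex.zero_le_real.mpr (by linarith)))

theorem isState_werner {p : ℝ} (hp₀ : 0 ≤ p) (hp₁ : p ≤ 1) : IsState (werner p) :=
  ⟨posSemidef_werner hp₀ hp₁, trace_werner p⟩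

theorem aeval_werner (p : ℝ) :
    aeval (werner p) ((X - C ((1 + 3 * p) / 4)) * (X - C ((1 - p) / 4))) = 0 := by
  simp only [map_mul, map_sub, aeval_X, aeval_C, algebraMap_eq_diagonal]
  rw [werner_eq]
  ext i j
  fin_cases i <;> fin_cases j <;> simp [mul_apply, Fin.sum_univ_four] <;> ring

theorem kron_eq (A B : Matrix (Fin 2) (Fin 2) ℂ) : kron A B =
    !![A 0 0 * B 0 0, A 0 0 * B 0 1, A 0 1 * B 0 0, A 0 1 * B 0 1;
       A 0 0 * B 1 0, A 0 0 * B 1 1, A 0 1 * B 1 0, A 0 1 * B 1 1;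
       A 1 0 * B 0 0, A 1 0 * B 0 1, A 1 1 * B 0 0, A 1 1 * B 0 1;
       A 1 0 * B 1 0, A 1 0 * B 1 1, A 1 1 * B 1 0, A 1 1 * B 1 1] := by
  ext i j
  fin_cases i <;> fin_cases j <;> rfl

theorem corrT_werner (p : ℝ) : corrT (werner p) = diagonal ![p, -p, p] := by
  ext i j
  fin_cases i <;> fin_cases j <;>
    simp [corrT, werner_eq, kron_eq, pauli, trace, Fin.sum_univ_four] <;> ring

theorem transpose_corrT_werner_mul_self (p : ℝ) :
    (corrT (werner p))ᵀ * corrT (werner p) = algebraMap ℝ _ (p ^ 2) := by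
  rw [corrT_werner, diagonal_transpose, diagonal_mul_diagonal, algebraMap_eq_diagonal]
  congr 1 with i
  fin_cases i <;> simp [sq]

theorem vnEntropy_conj_werner {p : ℝ} (hp₀ : 0 < p) (hp₁ : p ≤ 1) {U : Matrix (Fin 4) (Fin 4) ℂ}
    (hU : U ∈ unitaryGroup (Fin 4) ℂ) :
    vnEntropy (U * werner p * Uᴴ) =
      (negMulLog ((1 + 3 * p) / 4) + 3 * negMulLog ((1 - p) / 4)) / log 2 := by
  have hρ := (isState_werner hp₀.le hp₁).conj_unitary hU
  rw [vnEntropy_eq_of_aeval_eq_zero (a := (1 + 3 * p) / 4) (b := (1 - p) / 4) hρ.1.isHermitian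
    hρ.2 (by linarith)
    (by rw [aeval_conj_unitary hU, aeval_werner, mul_zero, zero_mul])]
  have hslope : (1 - 4 * ((1 - p) / 4)) / ((1 + 3 * p) / 4 - (1 - p) / 4) = 1 :=
    div_eq_one_iff_eq (by linarith) |>.mpr (by ring)
  push_cast
  rw [hslope]
  ring

theorem one_le_vnEntropy_conj_werner {U : Matrix (Fin 4) (Fin 4) ℂ}
    (hU : U ∈ unitaryGroup (Fin 4) ℂ) : 1 ≤ vnEntropy (U * werner (18 / 25) * Uᴴ) := by
  rw [vnEntropy_conj_werner (by norm_num) (by norm_num) hU, le_div_iff₀ (log_pos one_lt_two),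
    one_mul]
  norm_num only [negMulLog]
  have hlog_a : log (79 / 100) ≤ -21 / 100 := by
    linarith [log_le_sub_one_of_pos (x := 79 / 100) (by norm_num)]
  have hlog_b : log (7 / 100) ≤ 3 / 25 - 4 * log 2 := by
    rw [show (7 / 100 : ℝ) = 28 / 25 / 2 ^ 4 by norm_num, log_div (by norm_num) (by norm_num),
      log_pow]
    push_cast
    linarith [log_le_sub_one_of_pos (x := 28 / 25) (by norm_num)]
  linarith [log_two_lt_d9]

/-- The Werner state with `p = 18/25` violates the Bell-CHSH inequality
(`M(σ_p) = 2p² > 1`, where `M` is the sum of the two largest eigenvalues of `TᵀT`)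
yet satisfies `S(σ_p) ≥ 1` and belongs to ACVENN. -/
theorem stmt_17 :
    ∃ h : ((corrT (werner (18 / 25)))ᵀ * corrT (werner (18 / 25))).IsHermitian,
      IsGreatest {x : ℝ | ∃ i j : Fin 3, i ≠ j ∧ x = h.eigenvalues i + h.eigenvalues j}
        (2 * (18 / 25 : ℝ) ^ 2) ∧
      1 < 2 * (18 / 25 : ℝ) ^ 2 ∧
      1 ≤ vnEntropy (werner (18 / 25)) ∧
      (IsState (werner (18 / 25)) ∧
        ∀ U ∈ Matrix.unitaryGroup (Fin 4) ℂ,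
          0 ≤ condEntropy (U * werner (18 / 25) * Uᴴ)) := by
  have hT : ((corrT (werner (18 / 25)))ᵀ * corrT (werner (18 / 25))).IsHermitian := by
    simpa [conjTranspose_eq_transpose_of_trivial] using
      isHermitian_conjTranspose_mul_self (corrT (werner (18 / 25)))
  have heig := hT.eigenvalues_eq_of_eq_algebraMap (transpose_corrT_werner_mul_self _)
  have hW : IsState (werner (18 / 25)) := isState_werner (by norm_num) (by norm_num)
  refine ⟨hT, ⟨⟨0, 1, by decide, by rw [heig, heig]; ring⟩, ?_⟩, by norm_num,
    by simpa using one_le_vnEntropy_conj_werner (one_mem _), hW, fun U hU => ?_⟩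
  · rintro x ⟨i, j, -, rfl⟩
    rw [heig, heig]
    linarith
  · have hA := vnEntropy_le_logb_card (hW.conj_unitary hU).ptraceB
    rw [Nat.cast_ofNat, logb_self_eq_one one_lt_two] at hA
    rw [condEntropy]
    linarith [one_le_vnEntropy_conj_werner hU]
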